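/- arXiv:1808.03245 — 3 statements merged into one kernel-verified Lean document; each statement's English description precedes it below -/
import Mathlib

section
/- With Θ_{A₂^∨,(0,0)}(x,y) = Σ_{(m,n)∈ℤ²} x^{2(m²+mn+n²)} y^{m+n} and Θ_{A₂^∨,(0,1)}(x,y) = Σ_{(m,n)∈ℤ²} ε^{m−n} x^{2(m²+mn+n²)} y^{m+n} where ε = e^{2πi/3}, and Θ_{A₂,(0,0)}, Θ_{A₂,(1,0)} as dictated by the A₂ lattice, one has the identity 2·Θ_{A₂^∨,(0,1)}(q^{1/6},y) = 3·Θ_{A₂,(0,0)}(q^{1/2},y) − Θ_{A₂^∨,(0,0)}(q^{1/6},y); equivalently Σ_{(m,n)} (2ε^{m−n}+1) q^{(m²+mn+n²)/3} y^{m+n} = 3 Σ_{(m,n)} q^{m²−mn+n²} y^{m+n}. -/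
open Complex
open scoped Real

/-!
The weight `g (m, n) = x ^ (2 (m² + mn + n²)) * y ^ (m + n)` is symmetric in `(m, n)`. For a
primitive cube root of unity `ζ`, `2 ζ ^ k + 1 = 3 [3 ∣ k] + (ζ ^ k - ζ ^ (-k))`, and the second
part is odd in `k = m - n`, so it sums to zero against `g`. What remains is three times the sum
of `g` over the sublattice `m ≡ n (mod 3)`, which `(a, b) ↦ (2a - b, 2b - a)` parametrises,
carrying `m² + mn + n²` to `3 (a² - ab + b²)` and `m + n` to `a + b`.
-/

lemma summable_zpow_sq_mul_zpow {x : ℂ} (y : ℂ) (hx0 : x ≠ 0) (hx : ‖x‖ < 1) (hy : y ≠ 0) :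
    Summable fun n : ℤ => x ^ (n ^ 2) * y ^ n := by
  have hterm (n : ℤ) : jacobiTheta₂_term n (log y / (2 * π * I)) (log x / (π * I)) =
      x ^ (n ^ 2) * y ^ n := by
    have hπ : (π : ℂ) ≠ 0 := ofReal_ne_zero.2 Real.pi_ne_zero
    have hexp : 2 * π * I * n * (log y / (2 * π * I)) + π * I * n ^ 2 * (log x / (π * I)) =
        ((n ^ 2 : ℤ) : ℂ) * log x + (n : ℂ) * log y := by
      push_cast; field_simp; ring
    rw [jacobiTheta₂_term, hexp, Complex.exp_add, exp_int_mul, exp_int_mul, exp_log hx0, exp_log hy]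
  have him : 0 < (log x / (π * I)).im := by
    simpa [div_eq_mul_inv, log_re] using
      mul_neg_of_neg_of_pos (Real.log_neg (norm_pos_iff.2 hx0) hx) (inv_pos.2 Real.pi_pos)
  simpa only [hterm] using (summable_jacobiTheta₂_term_iff (log y / (2 * π * I)) _).2 him

lemma summable_zpow_quadForm {x : ℂ} (y : ℂ) (hx0 : x ≠ 0) (hx : ‖x‖ < 1) (hy : y ≠ 0) :
    Summable fun p : ℤ × ℤ => x ^ (2 * (p.1 ^ 2 + p.1 * p.2 + p.2 ^ 2)) * y ^ (p.1 + p.2) := by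
  have hθ := (summable_zpow_sq_mul_zpow y hx0 hx hy).norm
  refine .of_norm_bounded (hθ.mul_of_nonneg hθ (fun _ ↦ norm_nonneg _) fun _ ↦ norm_nonneg _) ?_
  rintro ⟨m, n⟩
  have hle : m ^ 2 + n ^ 2 ≤ 2 * (m ^ 2 + m * n + n ^ 2) := by nlinarith [sq_nonneg (m + n)]
  calc ‖x ^ (2 * (m ^ 2 + m * n + n ^ 2)) * y ^ (m + n)‖
      = ‖x‖ ^ (2 * (m ^ 2 + m * n + n ^ 2)) * ‖y‖ ^ (m + n) := by
        rw [norm_mul, norm_zpow, norm_zpow]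
    _ ≤ ‖x‖ ^ (m ^ 2 + n ^ 2) * ‖y‖ ^ (m + n) := by
        have := zpow_le_zpow_right_of_le_one₀ (norm_pos_iff.2 hx0) hx.le hle
        gcongr
    _ = ‖x ^ (m ^ 2) * y ^ m‖ * ‖x ^ (n ^ 2) * y ^ n‖ := by
        simp only [norm_mul, norm_zpow, zpow_add₀ (norm_ne_zero_iff.2 hx0),
          zpow_add₀ (norm_ne_zero_iff.2 hy)]
        ring

lemma IsPrimitiveRoot.two_mul_zpow_add_one {K : Type*} [Field K] {ζ : K}
    (hζ : IsPrimitiveRoot ζ 3) (k : ℤ) :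
    2 * ζ ^ k + 1 = (if (3 : ℤ) ∣ k then 3 else 0) + (ζ ^ k - ζ ^ (-k)) := by
  have h0 : ζ ≠ 0 := hζ.ne_zero (by norm_num)
  have hsum : 1 + ζ + ζ ^ 2 = 0 := by
    simpa [Finset.sum_range_succ] using hζ.geom_sum_eq_zero (by norm_num)
  have hper (j : ℤ) : ζ ^ j = ζ ^ (j % 3) := by
    conv_lhs => rw [← Int.emod_add_mul_ediv j 3]
    rw [zpow_add₀ h0, zpow_mul, show ζ ^ (3 : ℤ) = 1 by exact_mod_cast hζ.pow_eq_one,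
      one_zpow, mul_one]
  simp only [hper k, hper (-k), Int.dvd_iff_emod_eq_zero]
  rcases (by omega : k % 3 = 0 ∨ k % 3 = 1 ∨ k % 3 = 2) with h | h | h
  · simp only [h, ↓reduceIte, show -k % 3 = 0 by omega, zpow_zero, sub_self, add_zero]
    norm_num
  · simp only [h, show -k % 3 = 2 by omega, one_ne_zero, ↓reduceIte, zpow_ofNat, pow_one,
      zero_add]
    linear_combination hsum
  · simp only [h, show -k % 3 = 1 by omega, OfNat.ofNat_ne_zero, ↓reduceIte, zpow_ofNat, pow_one,
      zero_add]
    linear_combination hsum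

lemma tsum_eq_zero_of_swap_eq_neg {α E : Type*} [AddCommGroup E] [TopologicalSpace E]
    [IsTopologicalAddGroup E] [T2Space E] [IsAddTorsionFree E] {f : α × α → E}
    (hf : ∀ p, f p.swap = -f p) : ∑' p, f p = 0 := by
  refine self_eq_neg.1 ?_
  calc ∑' p, f p = ∑' p : α × α, f p.swap := ((Equiv.prodComm α α).tsum_eq f).symm
    _ = -∑' p, f p := by simp only [hf, tsum_neg]

def a2ToDualSublattice (p : ℤ × ℤ) : ℤ × ℤ := (2 * p.1 - p.2, 2 * p.2 - p.1)

lemma a2ToDualSublattice_injective : Function.Injective a2ToDualSublattice := by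
  rintro ⟨a, b⟩ ⟨c, d⟩ h
  simp only [a2ToDualSublattice, Prod.mk.injEq] at h
  ext <;> omega

lemma range_a2ToDualSublattice :
    Set.range a2ToDualSublattice = {p | (3 : ℤ) ∣ p.1 - p.2} := by
  ext ⟨m, n⟩
  simp only [Set.mem_range, Set.mem_ofPred_eq, a2ToDualSublattice, Prod.mk.injEq, Prod.exists]
  constructor
  · rintro ⟨a, b, rfl, rfl⟩
    exact ⟨a - b, by ring⟩
  · rintro ⟨d, hd⟩
    exact ⟨n + 2 * d, n + d, by omega, by omega⟩

lemma tsum_two_mul_zpow_sub_add_one_mul {ζ : ℂ} (hζ : IsPrimitiveRoot ζ 3) {g : ℤ × ℤ → ℂ}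
    (hg : Summable g) (hg_swap : ∀ p, g p.swap = g p) :
    ∑' p, (2 * ζ ^ (p.1 - p.2) + 1) * g p = 3 * ∑' q, g (a2ToDualSublattice q) := by
  set B : ℤ × ℤ → ℂ := fun p => (ζ ^ (p.1 - p.2) - ζ ^ (p.2 - p.1)) * g p
  have hsplit (p : ℤ × ℤ) : (2 * ζ ^ (p.1 - p.2) + 1) * g p =
      (Set.range a2ToDualSublattice).indicator (3 * g ·) p + B p := by
    rw [hζ.two_mul_zpow_add_one, neg_sub, range_a2ToDualSublattice]
    by_cases h : (3 : ℤ) ∣ p.1 - p.2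
    · simp only [h, ↓reduceIte, Set.indicator, Set.mem_ofPred_eq, B]
      ring
    · simp [Set.indicator, B, h]
  have hB : Summable B := by
    refine .of_norm_bounded (hg.norm.mul_left 2) fun p => ?_
    have hζ1 (k : ℤ) : ‖ζ ^ k‖ = 1 := by
      rw [norm_zpow, hζ.norm'_eq_one (by norm_num), one_zpow]
    calc ‖B p‖ ≤ (‖ζ ^ (p.1 - p.2)‖ + ‖ζ ^ (p.2 - p.1)‖) * ‖g p‖ := by
          rw [norm_mul]; gcongr; exact norm_sub_le _ _
      _ = 2 * ‖g p‖ := by rw [hζ1, hζ1]; ring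
  have hB_zero : ∑' p, B p = 0 := tsum_eq_zero_of_swap_eq_neg fun p => by
    simp only [B, Prod.fst_swap, Prod.snd_swap, hg_swap]; ring
  rw [tsum_congr hsplit, ((hg.mul_left 3).indicator _).tsum_add hB, hB_zero, add_zero,
    ← tsum_subtype, tsum_range (3 * g ·) a2ToDualSublattice_injective, tsum_mul_left]

/-- With `ε = e^{2πi/3}`, the identity
`Σ (2ε^{m−n}+1) q^{(m²+mn+n²)/3} y^{m+n} = 3 Σ q^{m²−mn+n²} y^{m+n}`, written in the
variable `x = q^{1/6}`; equivalently
`2·Θ_{A₂^∨,(0,1)}(q^{1/6},y) = 3·Θ_{A₂,(0,0)}(q^{1/2},y) − Θ_{A₂^∨,(0,0)}(q^{1/6},y)`. -/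
theorem stmt6 (x y : ℂ) (hx0 : x ≠ 0) (hx : ‖x‖ < 1) (hy : y ≠ 0) :
    ∑' p : ℤ × ℤ,
      (2 * Complex.exp (2 * Real.pi * Complex.I / 3) ^ (p.1 - p.2) + 1) *
        x ^ (2 * (p.1 ^ 2 + p.1 * p.2 + p.2 ^ 2)) * y ^ (p.1 + p.2) =
    3 * ∑' p : ℤ × ℤ, x ^ (6 * (p.1 ^ 2 - p.1 * p.2 + p.2 ^ 2)) * y ^ (p.1 + p.2) := by
  have hζ : IsPrimitiveRoot (Complex.exp (2 * Real.pi * Complex.I / 3)) 3 := by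
    exact_mod_cast Complex.isPrimitiveRoot_exp 3 (by norm_num)
  have key := tsum_two_mul_zpow_sub_add_one_mul hζ (summable_zpow_quadForm y hx0 hx hy) fun p => by
    simp only [Prod.fst_swap, Prod.snd_swap]; congr 2 <;> ring
  simp only [← mul_assoc] at key
  rw [key]
  congr 1
  refine tsum_congr fun q => ?_
  simp only [a2ToDualSublattice]
  congr 2 <;> ring
end

section
/- Let ε = e^{2πi/3}. Substituting x ↦ εx in Θ_{A₂^∨,(0,0)}(x,y) = Σ_{(m,n)∈ℤ²} x^{2(m²+mn+n²)} y^{m+n} yields Θ_{A₂^∨,(0,0)}(εx,y) = (2+ε)·Θ_{A₂,(0,0)}(x³,y) − (1+ε)·Θ_{A₂^∨,(0,0)}(x,y), where Θ_{A₂,(0,0)}(x³,y) = Σ_{(m,n)∈ℤ²} x^{6(m²−mn+n²)} y^{m+n}. -/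
/-! Since `m² + mn + n² ≡ (m - n)² (mod 3)`, the factor `ε^{2(m² + mn + n²)}` is `1` on the
sublattice `3 ∣ m - n` and `ε² = -1 - ε` off it, i.e. `(2 + ε)·[3 ∣ m - n] - (1 + ε)`. The
sublattice is a copy of `A₂`, parametrised by `(a, b) ↦ (2a - b, 2b - a)`, which turns
`2(m² + mn + n²)` into `6(a² - ab + b²)`; absolute convergence of the theta series justifies the
termwise manipulations. -/

open Complex

/-- `r ^ k² * s ^ k` is the norm of the Jacobi theta term at `τ = -i log r / π`,
`z = -i log s / 2π`. -/
lemma Real.summable_zpow_sq_mul_zpow {r s : ℝ} (hr₀ : 0 < r) (hr₁ : r < 1) (hs : 0 < s) :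
    Summable fun k : ℤ ↦ r ^ (k ^ 2) * s ^ k := by
  have hτ : 0 < (I * (-Real.log r / Real.pi : ℝ)).im := by
    simpa using div_pos (neg_pos.2 (Real.log_neg hr₀ hr₁)) Real.pi_pos
  refine ((summable_jacobiTheta₂_term_iff (I * (-Real.log s / (2 * Real.pi) : ℝ)) _).2
    hτ).norm.congr fun k ↦ ?_
  rw [norm_jacobiTheta₂_term, ← Real.rpow_intCast, ← Real.rpow_intCast,
    Real.rpow_def_of_pos hr₀, Real.rpow_def_of_pos hs, ← Real.exp_add]
  congr 1
  simp only [mul_im, I_re, I_im, ofReal_re, ofReal_im]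
  field_simp
  push_cast
  ring

lemma summable_zpow_two_mul_sq_add_mul_add_sq_mul_zpow {x y : ℂ} (hx₀ : x ≠ 0) (hx₁ : ‖x‖ < 1)
    (hy : y ≠ 0) :
    Summable fun p : ℤ × ℤ ↦ x ^ (2 * (p.1 ^ 2 + p.1 * p.2 + p.2 ^ 2)) * y ^ (p.1 + p.2) := by
  have hr₀ : 0 < ‖x‖ := norm_pos_iff.2 hx₀
  have h := Real.summable_zpow_sq_mul_zpow hr₀ hx₁ (norm_pos_iff.2 hy)
  refine .of_norm_bounded (h.mul_of_nonneg h (fun _ ↦ by positivity) fun _ ↦ by positivity)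
    fun ⟨m, n⟩ ↦ ?_
  have hsplit : ‖x ^ (2 * (m ^ 2 + m * n + n ^ 2)) * y ^ (m + n)‖ =
      ‖x‖ ^ (m ^ 2) * ‖y‖ ^ m * (‖x‖ ^ (n ^ 2) * ‖y‖ ^ n) * ‖x‖ ^ ((m + n) ^ 2) := by
    rw [norm_mul, norm_zpow, norm_zpow, zpow_add₀ (norm_ne_zero_iff.2 hy),
      show 2 * (m ^ 2 + m * n + n ^ 2) = m ^ 2 + n ^ 2 + (m + n) ^ 2 by ring,
      zpow_add₀ hr₀.ne', zpow_add₀ hr₀.ne']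
    ring
  rw [hsplit]
  exact mul_le_of_le_one_right (by positivity) (zpow_le_one₀ hr₀ hx₁.le (sq_nonneg _))

lemma ZMod.two_mul_sq_add_mul_add_sq (a b : ZMod 3) :
    2 * (a ^ 2 + a * b + b ^ 2) = if a = b then 0 else 2 := by
  revert a b
  decide

lemma IsPrimitiveRoot.zpow_two_mul_sq_add_mul_add_sq {K : Type*} [Field K] {ζ : K}
    (hζ : IsPrimitiveRoot ζ 3) (m n : ℤ) :
    ζ ^ (2 * (m ^ 2 + m * n + n ^ 2)) = (2 + ζ) * (if 3 ∣ m - n then 1 else 0) - (1 + ζ) := by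
  have hζ₀ : ζ ≠ 0 := hζ.ne_zero (by norm_num)
  have hsum : 1 + ζ + ζ ^ 2 = 0 := by
    simpa [Finset.sum_range_succ] using hζ.geom_sum_eq_zero (by norm_num)
  have hpow {A B : ℤ} (h : (A : ZMod 3) = B) : ζ ^ A = ζ ^ B := by
    rw [ZMod.intCast_eq_intCast_iff_dvd_sub] at h
    rw [← div_eq_one_iff_eq (zpow_ne_zero _ hζ₀), ← zpow_sub₀ hζ₀, hζ.zpow_eq_one_iff_dvd,
      ← dvd_neg, neg_sub]
    exact_mod_cast h
  have hmn : 3 ∣ m - n ↔ (m : ZMod 3) = n := by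
    rw [ZMod.intCast_eq_intCast_iff_dvd_sub, dvd_sub_comm]
    rfl
  have hexp := ZMod.two_mul_sq_add_mul_add_sq m n
  simp only [hmn]
  split_ifs at hexp ⊢
  · rw [show (2 + ζ) * 1 - (1 + ζ) = ζ ^ (0 : ℤ) by simp; ring]
    exact hpow (by push_cast; exact hexp)
  · rw [show (2 + ζ) * 0 - (1 + ζ) = ζ ^ (2 : ℤ) by rw [zpow_two]; linear_combination -hsum]
    exact hpow (by push_cast; exact hexp)

/-- The index-3 sublattice `A₂ ⊂ A₂^∨`, in coordinates where `m² + mn + n²` pulls back to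
`3(a² - ab + b²)`. -/
def A2.toDual (p : ℤ × ℤ) : ℤ × ℤ := (2 * p.1 - p.2, 2 * p.2 - p.1)

lemma A2.toDual_injective : Function.Injective A2.toDual := by
  intro p q h
  simp only [A2.toDual, Prod.mk.injEq] at h
  ext <;> omega

lemma A2.range_toDual : Set.range A2.toDual = {p : ℤ × ℤ | 3 ∣ p.1 - p.2} := by
  ext ⟨m, n⟩
  constructor
  · rintro ⟨⟨a, b⟩, h⟩
    simp only [A2.toDual, Prod.mk.injEq] at h
    exact ⟨a - b, by omega⟩
  · rintro ⟨c, hc⟩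
    exact ⟨(n + 2 * c, n + c), by simp only [A2.toDual, Prod.mk.injEq]; omega⟩

lemma A2.tsum_indicator_eq_tsum_toDual {M : Type*} [AddCommMonoid M] [TopologicalSpace M]
    (f : ℤ × ℤ → M) :
    ∑' p, {p : ℤ × ℤ | 3 ∣ p.1 - p.2}.indicator f p = ∑' p, f (A2.toDual p) := by
  rw [← A2.toDual_injective.tsum_eq (A2.range_toDual ▸ Set.support_indicator_subset)]
  exact tsum_congr fun p ↦ Set.indicator_of_mem (A2.range_toDual ▸ Set.mem_range_self p) f

/-- With `ε = e^{2πi/3}`, substituting `x ↦ εx` into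
`Θ_{A₂^∨,(0,0)}(x,y) = Σ x^{2(m²+mn+n²)} y^{m+n}` gives
`Θ_{A₂^∨,(0,0)}(εx,y) = (2+ε)·Θ_{A₂,(0,0)}(x³,y) − (1+ε)·Θ_{A₂^∨,(0,0)}(x,y)`. -/
theorem stmt7 (x y : ℂ) (hx0 : x ≠ 0) (hx : ‖x‖ < 1) (hy : y ≠ 0) :
    ∑' p : ℤ × ℤ,
      (Complex.exp (2 * Real.pi * Complex.I / 3) * x) ^ (2 * (p.1 ^ 2 + p.1 * p.2 + p.2 ^ 2)) *
        y ^ (p.1 + p.2) =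
    (2 + Complex.exp (2 * Real.pi * Complex.I / 3)) *
      ∑' p : ℤ × ℤ, x ^ (6 * (p.1 ^ 2 - p.1 * p.2 + p.2 ^ 2)) * y ^ (p.1 + p.2) -
    (1 + Complex.exp (2 * Real.pi * Complex.I / 3)) *
      ∑' p : ℤ × ℤ, x ^ (2 * (p.1 ^ 2 + p.1 * p.2 + p.2 ^ 2)) * y ^ (p.1 + p.2) := by
  set ε := Complex.exp (2 * Real.pi * Complex.I / 3)
  have hε : IsPrimitiveRoot ε 3 := by
    simpa using isPrimitiveRoot_exp 3 (by norm_num)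
  set S := {p : ℤ × ℤ | 3 ∣ p.1 - p.2}
  set f := fun p : ℤ × ℤ ↦ x ^ (2 * (p.1 ^ 2 + p.1 * p.2 + p.2 ^ 2)) * y ^ (p.1 + p.2)
  have hf : Summable f := summable_zpow_two_mul_sq_add_mul_add_sq_mul_zpow hx0 hx hy
  calc _ = ∑' p, ((2 + ε) * S.indicator f p - (1 + ε) * f p) := by
        refine tsum_congr fun p ↦ ?_
        rw [mul_zpow, hε.zpow_two_mul_sq_add_mul_add_sq, Set.indicator_apply]
        simp only [S, f, Set.mem_ofPred_eq]
        split_ifs <;> ring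
    _ = (2 + ε) * ∑' p, S.indicator f p - (1 + ε) * ∑' p, f p := by
        rw [((hf.indicator S).mul_left _).tsum_sub (hf.mul_left _), tsum_mul_left, tsum_mul_left]
    _ = _ := by
        rw [A2.tsum_indicator_eq_tsum_toDual]
        congr 2
        refine tsum_congr fun ⟨a, b⟩ ↦ ?_
        simp only [f, A2.toDual]
        congr 2 <;> ring
end

section
/- Define Z(x,y) = Θ_{A₂^∨,(0,0)}(x,y)/Θ_{A₂^∨,(0,1)}(x,y) and W(x,y) = Θ_{A₂,(0,0)}(x,y)/Θ_{A₂,(1,0)}(x,y) as ratios of the theta series defined above (viewed as formal Laurent/Puiseux series in x over ℚ(y) or as meromorphic functions). Then W(x³,y) = (Z(x,y)+2)/(Z(x,y)−1). -/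
/-!
Split the points `(m, n)` of the `A₂^∨` series by `m - n mod 3`. The class `0` is the image
of `(a, b) ↦ (2a - b, 2b - a)`, which turns `m² + mn + n²` into `3(a² - ab + b²)`; the
classes `2` and `1` are its translates by `±(1, -1)`, on which the form becomes
`3(a² - ab + b² ± (a - b)) + 1`. So with `A = Θ_{A₂,(0,0)}(x³,y)` and
`B = Θ_{A₂,(1,0)}(x³,y)` (the latter symmetric under `a ↔ b`), the numerator of `Z` is
`A + 2B` and, as `ε^{m-n}` only depends on the class and `1 + ε + ε² = 0`, its denominator
is `A - B`. Then `(Z + 2)/(Z - 1) = 3A/3B = A/B`.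
-/

/-- `Z(x,y) = Θ_{A₂^∨,(0,0)}(x,y) / Θ_{A₂^∨,(0,1)}(x,y)`. -/
noncomputable def Zfun (x y : ℂ) : ℂ :=
  (∑' p : ℤ × ℤ, x ^ (2 * (p.1 ^ 2 + p.1 * p.2 + p.2 ^ 2)) * y ^ (p.1 + p.2)) /
  (∑' p : ℤ × ℤ, Complex.exp (2 * Real.pi * Complex.I / 3) ^ (p.1 - p.2) *
      x ^ (2 * (p.1 ^ 2 + p.1 * p.2 + p.2 ^ 2)) * y ^ (p.1 + p.2))

/-- `W(x³,y) = Θ_{A₂,(0,0)}(x³,y) / Θ_{A₂,(1,0)}(x³,y)`, with the fractional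
exponent cleared by writing everything in the variable `x`. -/
noncomputable def Wcube (x y : ℂ) : ℂ :=
  (∑' p : ℤ × ℤ, x ^ (6 * (p.1 ^ 2 - p.1 * p.2 + p.2 ^ 2)) * y ^ (p.1 + p.2)) /
  (∑' p : ℤ × ℤ, x ^ (6 * (p.1 ^ 2 - p.1 * p.2 + p.2 ^ 2 + p.1 - p.2) + 2) * y ^ (p.1 + p.2))

open Filter Function

lemma summable_pow_sq_mul_pow {r : ℝ} (hr0 : 0 ≤ r) (hr1 : r < 1) (M : ℝ) :
    Summable (fun n : ℕ => r ^ (n ^ 2) * M ^ n) := by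
  have hsmall : ∀ᶠ n : ℕ in atTop, r ^ n * ‖M‖ ≤ 1 / 2 := by
    have := (tendsto_pow_atTop_nhds_zero_of_lt_one hr0 hr1).mul_const ‖M‖
    rw [zero_mul] at this
    exact this.eventually_le_const (by norm_num)
  refine summable_geometric_two.of_norm_bounded_eventually_nat ?_
  filter_upwards [hsmall] with n hn
  calc ‖r ^ (n ^ 2) * M ^ n‖ = (r ^ n * ‖M‖) ^ n := by
        rw [norm_mul, norm_pow, norm_pow, Real.norm_of_nonneg hr0, mul_pow, ← pow_mul, sq]
    _ ≤ (1 / 2) ^ n := pow_le_pow_left₀ (by positivity) hn n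

lemma summable_zpow_sq_mul_zpow_s8 {r : ℝ} (hr0 : 0 ≤ r) (hr1 : r < 1) (s : ℝ) :
    Summable (fun n : ℤ => r ^ (n ^ 2) * s ^ n) := by
  refine Summable.of_nat_of_neg ?_ ?_
  · simpa [← zpow_natCast] using summable_pow_sq_mul_pow hr0 hr1 s
  · refine (summable_pow_sq_mul_pow hr0 hr1 s⁻¹).congr fun n => ?_
    rw [neg_sq, zpow_neg, ← inv_zpow, ← Nat.cast_pow, zpow_natCast, zpow_natCast]

lemma summable_zpow_mul_zpow_add {x y : ℂ} (hx0 : x ≠ 0) (hx : ‖x‖ < 1) (hy : y ≠ 0)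
    {E : ℤ × ℤ → ℤ} (C : ℤ) (hE : ∀ p : ℤ × ℤ, p.1 ^ 2 + p.2 ^ 2 - C ≤ E p) :
    Summable (fun p : ℤ × ℤ => x ^ E p * y ^ (p.1 + p.2)) := by
  set r := ‖x‖
  have hr0 : 0 < r := norm_pos_iff.2 hx0
  have hf := summable_zpow_sq_mul_zpow_s8 hr0.le hx ‖y‖
  refine Summable.of_norm_bounded ((hf.mul_of_nonneg hf ?_ ?_).mul_left (r ^ (-C))) ?_
  · intro n; positivity
  · intro n; positivity
  rintro ⟨m, n⟩
  calc ‖x ^ E (m, n) * y ^ (m + n)‖ = r ^ E (m, n) * (‖y‖ ^ m * ‖y‖ ^ n) := by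
        rw [norm_mul, norm_zpow, norm_zpow, zpow_add₀ (norm_ne_zero_iff.2 hy)]
    _ ≤ r ^ (m ^ 2 + n ^ 2 - C) * (‖y‖ ^ m * ‖y‖ ^ n) :=
        mul_le_mul_of_nonneg_right
          (zpow_le_zpow_right_of_le_one₀ hr0 hx.le (hE (m, n))) (by positivity)
    _ = r ^ (-C) * (r ^ (m ^ 2) * ‖y‖ ^ m * (r ^ (n ^ 2) * ‖y‖ ^ n)) := by
        rw [sub_eq_neg_add, zpow_add₀ hr0.ne', zpow_add₀ hr0.ne']
        ring

-- Summands of `Θ_{A₂,(0,0)}(x³,y)`, `Θ_{A₂,(1,0)}(x³,y)` and `Θ_{A₂^∨,(0,0)}(x,y)`.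
noncomputable def a2Term (x y : ℂ) (p : ℤ × ℤ) : ℂ :=
  x ^ (6 * (p.1 ^ 2 - p.1 * p.2 + p.2 ^ 2)) * y ^ (p.1 + p.2)

noncomputable def a2ShiftedTerm (x y : ℂ) (p : ℤ × ℤ) : ℂ :=
  x ^ (6 * (p.1 ^ 2 - p.1 * p.2 + p.2 ^ 2 + p.1 - p.2) + 2) * y ^ (p.1 + p.2)

noncomputable def a2DualTerm (x y : ℂ) (p : ℤ × ℤ) : ℂ :=
  x ^ (2 * (p.1 ^ 2 + p.1 * p.2 + p.2 ^ 2)) * y ^ (p.1 + p.2)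

lemma summable_a2Term {x y : ℂ} (hx0 : x ≠ 0) (hx : ‖x‖ < 1) (hy : y ≠ 0) :
    Summable (a2Term x y) :=
  summable_zpow_mul_zpow_add hx0 hx hy 0 fun p => by nlinarith [sq_nonneg (p.1 - p.2)]

lemma summable_a2ShiftedTerm {x y : ℂ} (hx0 : x ≠ 0) (hx : ‖x‖ < 1) (hy : y ≠ 0) :
    Summable (a2ShiftedTerm x y) :=
  summable_zpow_mul_zpow_add hx0 hx hy 10 fun p => by
    nlinarith [sq_nonneg (p.1 - p.2), sq_nonneg (p.1 + 1), sq_nonneg (p.2 - 1)]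

def a2DualCoset (j : ℤ) (q : ℤ × ℤ) : ℤ × ℤ := (2 * q.1 - q.2 + j, 2 * q.2 - q.1 - j)

lemma a2DualCoset_injective (j : ℤ) : Injective (a2DualCoset j) := by
  rintro ⟨a, b⟩ ⟨c, d⟩ h
  simp only [a2DualCoset, Prod.mk.injEq] at h ⊢
  omega

lemma range_a2DualCoset (j : ℤ) :
    Set.range (a2DualCoset j) = {p : ℤ × ℤ | (p.1 - p.2) % 3 = 2 * j % 3} := by
  ext ⟨m, n⟩
  simp only [Set.mem_range, Set.mem_ofPred_eq, a2DualCoset, Prod.mk.injEq, Prod.exists]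
  constructor
  · rintro ⟨a, b, rfl, rfl⟩
    omega
  · intro h
    exact ⟨(2 * m + n - j) / 3, (m + 2 * n + j) / 3, by omega, by omega⟩

lemma a2DualTerm_a2DualCoset (x y : ℂ) (j : ℤ) (q : ℤ × ℤ) :
    a2DualTerm x y (a2DualCoset j q) =
      x ^ (6 * (q.1 ^ 2 - q.1 * q.2 + q.2 ^ 2 + j * (q.1 - q.2)) + 2 * j ^ 2) *
        y ^ (q.1 + q.2) := by
  simp only [a2DualTerm, a2DualCoset]
  ring_nf

lemma hasSum_indicator_residue {x y a : ℂ} {j r : ℤ} (hr : 2 * j % 3 = r)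
    (h : HasSum (a2DualTerm x y ∘ a2DualCoset j) a) :
    HasSum ({p : ℤ × ℤ | (p.1 - p.2) % 3 = r}.indicator (a2DualTerm x y)) a := by
  rw [← hr, ← range_a2DualCoset]
  exact hasSum_subtype_iff_indicator.1 ((a2DualCoset_injective j).hasSum_range_iff.2 h)

lemma hasSum_residue_mul_a2DualTerm {x y A B : ℂ} (w : ℤ → ℂ) (hA : HasSum (a2Term x y) A)
    (hB : HasSum (a2ShiftedTerm x y) B) :
    HasSum (fun p => w ((p.1 - p.2) % 3) * a2DualTerm x y p) (w 0 * A + w 1 * B + w 2 * B) := by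
  have h0 : HasSum ({p : ℤ × ℤ | (p.1 - p.2) % 3 = 0}.indicator (a2DualTerm x y)) A :=
    hasSum_indicator_residue (j := 0) rfl <| hA.congr_fun fun q => by
      rw [comp_apply, a2DualTerm_a2DualCoset, a2Term]
      ring_nf
  have h1 : HasSum ({p : ℤ × ℤ | (p.1 - p.2) % 3 = 1}.indicator (a2DualTerm x y)) B :=
    hasSum_indicator_residue (j := -1) rfl <|
      ((Equiv.prodComm ℤ ℤ).hasSum_iff.2 hB).congr_fun fun q => by
        rw [comp_apply, a2DualTerm_a2DualCoset, comp_apply, Equiv.prodComm_apply, a2ShiftedTerm,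
          Prod.fst_swap, Prod.snd_swap]
        ring_nf
  have h2 : HasSum ({p : ℤ × ℤ | (p.1 - p.2) % 3 = 2}.indicator (a2DualTerm x y)) B :=
    hasSum_indicator_residue (j := 1) rfl <| hB.congr_fun fun q => by
      rw [comp_apply, a2DualTerm_a2DualCoset, a2ShiftedTerm]
      ring_nf
  refine (((h0.mul_left (w 0)).add (h1.mul_left (w 1))).add (h2.mul_left (w 2))).congr_fun
    fun p => ?_
  obtain h | h | h : (p.1 - p.2) % 3 = 0 ∨ (p.1 - p.2) % 3 = 1 ∨ (p.1 - p.2) % 3 = 2 := by omega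
  all_goals simp only [Set.indicator_apply, Set.mem_ofPred_eq, h]; norm_num

lemma hasSum_a2DualTerm {x y A B : ℂ} (hA : HasSum (a2Term x y) A)
    (hB : HasSum (a2ShiftedTerm x y) B) : HasSum (a2DualTerm x y) (A + 2 * B) := by
  simpa [two_mul, add_assoc] using hasSum_residue_mul_a2DualTerm (fun _ => 1) hA hB

lemma zpow_emod_of_pow_eq_one {G₀ : Type*} [GroupWithZero G₀] {ζ : G₀} {n : ℕ}
    (h : ζ ^ n = 1) (k : ℤ) : ζ ^ (k % (n : ℤ)) = ζ ^ k := by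
  obtain rfl | hn := eq_or_ne n 0
  · simp
  have hζ : ζ ≠ 0 := by
    rintro rfl
    simp [zero_pow hn] at h
  conv_rhs => rw [← Int.emod_add_mul_ediv k n]
  rw [zpow_add₀ hζ, zpow_mul, zpow_natCast, h, one_zpow, mul_one]

lemma hasSum_zpow_mul_a2DualTerm {x y A B ζ : ℂ} (hζ : IsPrimitiveRoot ζ 3)
    (hA : HasSum (a2Term x y) A) (hB : HasSum (a2ShiftedTerm x y) B) :
    HasSum (fun p => ζ ^ (p.1 - p.2) * a2DualTerm x y p) (A - B) := by
  have hζ_sum : 1 + ζ + ζ ^ 2 = 0 := by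
    simpa [Finset.sum_range_succ] using hζ.geom_sum_eq_zero (by norm_num)
  convert hasSum_residue_mul_a2DualTerm (ζ ^ ·) hA hB using 1
  · funext p
    rw [← zpow_emod_of_pow_eq_one hζ.pow_eq_one]
    rfl
  · simp only [zpow_ofNat]
    linear_combination (-B) * hζ_sum

lemma div_eq_add_two_div_sub_one {K : Type*} [Field K] (h3 : (3 : K) ≠ 0) {a b : K}
    (hab : a - b ≠ 0) :
    a / b = ((a + 2 * b) / (a - b) + 2) / ((a + 2 * b) / (a - b) - 1) := by
  rw [div_add' _ _ _ hab, div_sub_one hab, div_div_div_cancel_right₀ hab,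
    show a + 2 * b + 2 * (a - b) = 3 * a by ring, show a + 2 * b - (a - b) = 3 * b by ring,
    mul_div_mul_left _ _ h3]

theorem stmt8_general (x y : ℂ) (hx0 : x ≠ 0) (hx : ‖x‖ < 1) (hy : y ≠ 0)
    (hden1 : (∑' p : ℤ × ℤ, Complex.exp (2 * Real.pi * Complex.I / 3) ^ (p.1 - p.2) *
        x ^ (2 * (p.1 ^ 2 + p.1 * p.2 + p.2 ^ 2)) * y ^ (p.1 + p.2)) ≠ 0) :
    Wcube x y = (Zfun x y + 2) / (Zfun x y - 1) := by
  unfold Wcube Zfun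
  set ε := Complex.exp (2 * Real.pi * Complex.I / 3)
  have hε : IsPrimitiveRoot ε 3 := by simpa using Complex.isPrimitiveRoot_exp 3 (by norm_num)
  simp only [mul_assoc, ← a2Term.eq_1, ← a2ShiftedTerm.eq_1, ← a2DualTerm.eq_1] at hden1 ⊢
  obtain ⟨A, hA⟩ := summable_a2Term hx0 hx hy
  obtain ⟨B, hB⟩ := summable_a2ShiftedTerm hx0 hx hy
  have hD := hasSum_zpow_mul_a2DualTerm hε hA hB
  rw [hD.tsum_eq] at hden1
  rw [hA.tsum_eq, hB.tsum_eq, (hasSum_a2DualTerm hA hB).tsum_eq, hD.tsum_eq]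
  exact div_eq_add_two_div_sub_one three_ne_zero hden1

/-- The identity `W(x³,y) = (Z(x,y)+2)/(Z(x,y)−1)`. -/
theorem stmt8 (x y : ℂ) (hx0 : x ≠ 0) (hx : ‖x‖ < 1) (hy : y ≠ 0)
    (hden1 : (∑' p : ℤ × ℤ, Complex.exp (2 * Real.pi * Complex.I / 3) ^ (p.1 - p.2) *
        x ^ (2 * (p.1 ^ 2 + p.1 * p.2 + p.2 ^ 2)) * y ^ (p.1 + p.2)) ≠ 0)
    (hden2 : (∑' p : ℤ × ℤ,
        x ^ (6 * (p.1 ^ 2 - p.1 * p.2 + p.2 ^ 2 + p.1 - p.2) + 2) * y ^ (p.1 + p.2)) ≠ 0)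
    (hZ : Zfun x y ≠ 1) :
    Wcube x y = (Zfun x y + 2) / (Zfun x y - 1) :=
  stmt8_general x y hx0 hx hy hden1
end
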